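/- Let 𝕋_t be a triod evolving by curvature on [0,T) with fixed endpoints P¹,P²,P³, and set d^i = |P^i − x₀| for x₀ ∈ ℝ². Then for every index i ∈ {1,2,3} and every t ∈ [0,T), |∫_t^T ⟨(P^i−x₀)/(2(T−ξ)), τ^i(1,ξ)⟩ ρ_{x₀}(P^i,ξ) dξ| ≤ (1/√(2π)) ∫_{d^i/√(2(T−t))}^{+∞} e^{−y²/2} dy ≤ 1/2; consequently, for every x₀ ∈ ℝ², lim_{t→T} Σ_{i=1}^3 ∫_t^T ⟨(P^i−x₀)/(2(T−ξ)), τ^i(1,ξ)⟩ ρ_{x₀}(P^i,ξ) dξ = 0 whenever x₀ ≠ P^i for all i, and the bound by 1/2 holds for every x₀. -/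

import Mathlib

noncomputable section

open Set Filter Metric MeasureTheory Real
open scoped Topology ENNReal NNReal

/-- The Euclidean plane. -/
abbrev E2 : Type := EuclideanSpace ℝ (Fin 2)

/-- Counterclockwise rotation by `π/2` centered at the origin. -/
def rot (v : E2) : E2 := (WithLp.equiv 2 (Fin 2 → ℝ)).symm ![-(v 1), v 0]

/-- Spatial derivative `γ_x` of a one-parameter family of curves. -/
def dX (γ : ℝ → ℝ → E2) (x t : ℝ) : E2 := deriv (fun y => γ y t) x

/-- Second spatial derivative `γ_xx`. -/
def dXX (γ : ℝ → ℝ → E2) (x t : ℝ) : E2 := deriv (fun y => dX γ y t) x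

/-- Time derivative `γ_t`. -/
def dT (γ : ℝ → ℝ → E2) (x t : ℝ) : E2 := deriv (fun s => γ x s) t

/-- Unit tangent vector `τ = γ_x/|γ_x|`. -/
def tangent (γ : ℝ → ℝ → E2) (x t : ℝ) : E2 := ‖dX γ x t‖⁻¹ • dX γ x t

/-- Unit normal vector `ν = R τ`. -/
def normal (γ : ℝ → ℝ → E2) (x t : ℝ) : E2 := rot (tangent γ x t)

/-- Curvature `k = ⟨γ_xx, ν⟩/|γ_x|²`. -/
def curv (γ : ℝ → ℝ → E2) (x t : ℝ) : ℝ :=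
  (inner ℝ (dXX γ x t) (normal γ x t)) / ‖dX γ x t‖ ^ 2

/-- Tangential velocity `λ = ⟨γ_xx, τ⟩/|γ_x|²`. -/
def tanVel (γ : ℝ → ℝ → E2) (x t : ℝ) : ℝ :=
  (inner ℝ (dXX γ x t) (tangent γ x t)) / ‖dX γ x t‖ ^ 2

/-- Arclength derivative `∂_s f = |γ_x|⁻¹ ∂_x f` of a function along the evolving curve. -/
def dS (γ : ℝ → ℝ → E2) (f : ℝ → ℝ → ℝ) (x t : ℝ) : ℝ :=
  ‖dX γ x t‖⁻¹ * deriv (fun y => f y t) x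

/-- A one-parameter family of triods `𝕋_t = ⋃ᵢ γⁱ(·,t)` evolving by curvature in `Ω`
over the set of times `J`, with fixed endpoints `P i ∈ ∂Ω`: the curves are `C²` in space
and `C¹` in time, regular, embedded, meet `∂Ω` exactly at the fixed endpoints, intersect
each other only at the common 3-point where the unit tangents sum to zero
(120-degree condition), and they move with velocity `γ_xx/|γ_x|²`. -/
structure IsTriodFlow (Ω : Set E2) (P : Fin 3 → E2)
    (γ : Fin 3 → ℝ → ℝ → E2) (J : Set ℝ) : Prop where
  smooth_x : ∀ i, ∀ t ∈ J, ContDiffOn ℝ 2 (fun x => γ i x t) (Icc 0 1)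
  smooth_t : ∀ i, ∀ x ∈ Icc (0:ℝ) 1, ContDiffOn ℝ 1 (fun s => γ i x s) J
  regular : ∀ i, ∀ x ∈ Icc (0:ℝ) 1, ∀ t ∈ J, dX (γ i) x t ≠ 0
  maps_to : ∀ i, ∀ x ∈ Icc (0:ℝ) 1, ∀ t ∈ J, γ i x t ∈ closure Ω
  boundary : ∀ i, ∀ x ∈ Icc (0:ℝ) 1, ∀ t ∈ J, (γ i x t ∈ frontier Ω ↔ x = 1)
  endpoint : ∀ i, ∀ t ∈ J, γ i 1 t = P i
  simple : ∀ i, ∀ t ∈ J, InjOn (fun x => γ i x t) (Icc 0 1)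
  pairwise : ∀ i j, i ≠ j → ∀ t ∈ J, ∀ x ∈ Icc (0:ℝ) 1, ∀ y ∈ Icc (0:ℝ) 1,
    γ i x t = γ j y t → x = 0 ∧ y = 0
  junction : ∀ i j, ∀ t ∈ J, γ i 0 t = γ j 0 t
  angle : ∀ t ∈ J, ∑ i : Fin 3, tangent (γ i) 0 t = 0
  motion : ∀ i, ∀ x ∈ Icc (0:ℝ) 1, ∀ t ∈ J,
    dT (γ i) x t = (‖dX (γ i) x t‖ ^ 2)⁻¹ • dXX (γ i) x t

/-- Length of one evolving curve at time `t`. -/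
def curveLength (γ : ℝ → ℝ → E2) (t : ℝ) : ℝ := ∫ x in (0:ℝ)..1, ‖dX γ x t‖

/-- The triod `𝕋_t` as a subset of the plane. -/
def triodSet (γ : Fin 3 → ℝ → ℝ → E2) (t : ℝ) : Set E2 :=
  ⋃ i : Fin 3, (fun x => γ i x t) '' Icc (0:ℝ) 1

/-- The backward heat kernel of `ℝ²` relative to `(x₀, T)`:
`ρ_{x₀}(x,t) = exp(−|x−x₀|²/(4(T−t)))/√(4π(T−t))`. -/
def heatKer (T : ℝ) (x₀ : E2) (x : E2) (t : ℝ) : ℝ :=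
  Real.exp (-‖x - x₀‖ ^ 2 / (4 * (T - t))) / Real.sqrt (4 * π * (T - t))

/-- The Gaussian density `Θ(x₀,t) = ∫_{𝕋_t} ρ_{x₀}(·,t) ds` of the evolving triod. -/
def gaussDensity (γ : Fin 3 → ℝ → ℝ → E2) (T : ℝ) (x₀ : E2) (t : ℝ) : ℝ :=
  ∑ i : Fin 3, ∫ x in (0:ℝ)..1, heatKer T x₀ (γ i x t) t * ‖dX (γ i) x t‖

/-- The boundary term of the monotonicity formula at the endpoint `Pⁱ`:
`⟨(Pⁱ−x₀)/(2(T−ξ)), τⁱ(1,ξ)⟩ ρ_{x₀}(Pⁱ,ξ)`. -/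
def boundaryTerm (γ : Fin 3 → ℝ → ℝ → E2) (P : Fin 3 → E2) (T : ℝ) (x₀ : E2)
    (i : Fin 3) (ξ : ℝ) : ℝ :=
  (inner ℝ ((2 * (T - ξ))⁻¹ • (P i - x₀)) (tangent (γ i) 1 ξ)) * heatKer T x₀ (P i) ξ

/-! Since `τⁱ` is a unit vector, the boundary term is dominated by
`dⁱ/(2(T−ξ)) ρ_{x₀}(Pⁱ,ξ)`. The substitution `y = dⁱ/√(2(T−ξ))` maps `(t,T)` onto
`(dⁱ/√(2(T−t)), ∞)` and turns this majorant into the standard Gaussian density, so its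
integral is a Gaussian tail: at most half the total mass, and tending to `0` as `t → T`
when `dⁱ > 0`. -/

lemma integrable_exp_neg_sq_div_two : Integrable fun y : ℝ => exp (-y ^ 2 / 2) := by
  convert integrable_exp_neg_mul_sq (by norm_num : (0:ℝ) < 1 / 2) using 3
  ring

lemma integral_Ioi_zero_exp_neg_sq_div_two :
    ∫ y in Ioi (0:ℝ), exp (-y ^ 2 / 2) = √(2 * π) / 2 := by
  convert integral_gaussian_Ioi (1 / 2) using 4
  · ring
  · ring

lemma inv_sqrt_two_pi_mul_integral_Ioi_le_half {c : ℝ} (hc : 0 ≤ c) :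
    (√(2 * π))⁻¹ * ∫ y in Ioi c, exp (-y ^ 2 / 2) ≤ 1 / 2 := by
  have hmono : ∫ y in Ioi c, exp (-y ^ 2 / 2) ≤ ∫ y in Ioi (0:ℝ), exp (-y ^ 2 / 2) :=
    setIntegral_mono_set integrable_exp_neg_sq_div_two.integrableOn
      (.of_forall fun _ => (exp_pos _).le) (Ioi_subset_Ioi hc).eventuallyLE
  calc (√(2 * π))⁻¹ * ∫ y in Ioi c, exp (-y ^ 2 / 2)
      ≤ (√(2 * π))⁻¹ * (√(2 * π) / 2) := by
        rw [← integral_Ioi_zero_exp_neg_sq_div_two]; gcongr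
    _ = 1 / 2 := by field_simp

lemma tendsto_integral_Ioi_exp_neg_sq_div_two :
    Tendsto (fun c : ℝ => ∫ y in Ioi c, exp (-y ^ 2 / 2)) atTop (𝓝 0) := by
  have h := tendsto_setIntegral_of_antitone (fun c : ℝ => measurableSet_Ioi)
    (fun _ _ hab => Ioi_subset_Ioi hab) ⟨0, integrable_exp_neg_sq_div_two.integrableOn⟩
  have hempty : ⋂ c : ℝ, Ioi c = ∅ :=
    eq_empty_of_forall_notMem fun y hy => lt_irrefl y (mem_iInter.1 hy y)
  rwa [hempty, Measure.restrict_empty, integral_zero_measure] at h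

section Substitution

variable {d T : ℝ}

lemma hasDerivAt_div_sqrt_two_mul_sub {ξ : ℝ} (hξ : ξ < T) :
    HasDerivAt (fun ξ => d / √(2 * (T - ξ))) (d / (2 * (T - ξ) * √(2 * (T - ξ)))) ξ := by
  have hpos : 0 < 2 * (T - ξ) := by linarith
  have hsqrt := (((hasDerivAt_id' ξ).const_sub T).const_mul 2).sqrt hpos.ne'
  refine ((hasDerivAt_const ξ d).div hsqrt (sqrt_pos.2 hpos).ne').congr_deriv ?_
  have hne : T - ξ ≠ 0 := (sub_pos.2 hξ).ne'
  field_simp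
  rw [sq_sqrt hpos.le]
  ring

lemma strictMonoOn_div_sqrt_two_mul_sub (hd : 0 < d) :
    StrictMonoOn (fun ξ => d / √(2 * (T - ξ))) (Iio T) := by
  intro a _ b hb hab
  have hb' : 0 < 2 * (T - b) := by linarith [mem_Iio.1 hb]
  exact div_lt_div_of_pos_left hd (sqrt_pos.2 hb') (sqrt_lt_sqrt hb'.le (by linarith))

lemma image_div_sqrt_two_mul_sub_Ioo (hd : 0 < d) {t : ℝ} (ht : t < T) :
    (fun ξ => d / √(2 * (T - ξ))) '' Ioo t T = Ioi (d / √(2 * (T - t))) := by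
  refine Subset.antisymm ?_ fun y hy => ?_
  · rintro _ ⟨ξ, hξ, rfl⟩
    exact strictMonoOn_div_sqrt_two_mul_sub hd ht hξ.2 hξ.1
  have hy0 : 0 < y := (div_pos hd (sqrt_pos.2 (by linarith))).trans hy
  have hdy : 0 < d / y := div_pos hd hy0
  refine ⟨T - (d / y) ^ 2 / 2, ⟨?_, by linarith [pow_pos hdy 2]⟩, ?_⟩
  · have : d / y < √(2 * (T - t)) := by
      rwa [mem_Ioi, div_lt_iff₀ (sqrt_pos.2 (by linarith)), mul_comm, ← div_lt_iff₀ hy0] at hy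
    nlinarith [sq_sqrt (by linarith : (0:ℝ) ≤ 2 * (T - t)), sqrt_nonneg (2 * (T - t))]
  · simp only [sub_sub_cancel, mul_div_cancel₀ _ (two_ne_zero' ℝ), sqrt_sq hdy.le]
    field_simp

lemma mul_heatKer_eq_gaussian_comp_div_sqrt (x₀ x : E2) {ξ : ℝ} (hξ : ξ < T) :
    (2 * (T - ξ))⁻¹ * ‖x - x₀‖ * heatKer T x₀ x ξ =
      (√(2 * π))⁻¹ * (‖x - x₀‖ / (2 * (T - ξ) * √(2 * (T - ξ))) *
        exp (-(‖x - x₀‖ / √(2 * (T - ξ))) ^ 2 / 2)) := by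
  have hpos : 0 < 2 * (T - ξ) := by linarith
  have hsplit : √(4 * π * (T - ξ)) = √(2 * π) * √(2 * (T - ξ)) := by
    rw [← sqrt_mul (by positivity)]; ring_nf
  have hexp : -(‖x - x₀‖ / √(2 * (T - ξ))) ^ 2 / 2 = -‖x - x₀‖ ^ 2 / (4 * (T - ξ)) := by
    rw [div_pow, sq_sqrt hpos.le]; field_simp; ring
  rw [heatKer, hsplit, hexp]
  field_simp

lemma integrableOn_Ioo_mul_heatKer_and_integral_eq {x₀ x : E2} (hx : x ≠ x₀) {t : ℝ}
    (ht : t < T) :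
    IntegrableOn (fun ξ => (2 * (T - ξ))⁻¹ * ‖x - x₀‖ * heatKer T x₀ x ξ) (Ioo t T) ∧
      ∫ ξ in Ioo t T, (2 * (T - ξ))⁻¹ * ‖x - x₀‖ * heatKer T x₀ x ξ =
        (√(2 * π))⁻¹ * ∫ y in Ioi (‖x - x₀‖ / √(2 * (T - t))), exp (-y ^ 2 / 2) := by
  have hd : 0 < ‖x - x₀‖ := norm_pos_iff.2 (sub_ne_zero.2 hx)
  have hderiv : ∀ ξ ∈ Ioo t T, HasDerivWithinAt (fun ξ => ‖x - x₀‖ / √(2 * (T - ξ)))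
      (‖x - x₀‖ / (2 * (T - ξ) * √(2 * (T - ξ)))) (Ioo t T) ξ := fun ξ hξ =>
    (hasDerivAt_div_sqrt_two_mul_sub hξ.2).hasDerivWithinAt
  have hinj : InjOn (fun ξ => ‖x - x₀‖ / √(2 * (T - ξ))) (Ioo t T) :=
    (strictMonoOn_div_sqrt_two_mul_sub hd).injOn.mono fun ξ hξ => hξ.2
  have hjac : EqOn (fun ξ => (2 * (T - ξ))⁻¹ * ‖x - x₀‖ * heatKer T x₀ x ξ)
      (fun ξ => (√(2 * π))⁻¹ * (|‖x - x₀‖ / (2 * (T - ξ) * √(2 * (T - ξ)))| •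
        exp (-(‖x - x₀‖ / √(2 * (T - ξ))) ^ 2 / 2))) (Ioo t T) := fun ξ hξ => by
    have : 0 < 2 * (T - ξ) := by linarith [hξ.2]
    dsimp only
    rw [mul_heatKer_eq_gaussian_comp_div_sqrt x₀ x hξ.2, smul_eq_mul, abs_of_pos (by positivity)]
  have himage := image_div_sqrt_two_mul_sub_Ioo hd ht
  constructor
  · refine IntegrableOn.congr_fun ?_ hjac.symm measurableSet_Ioo
    have hg : IntegrableOn (fun y => exp (-y ^ 2 / 2))
        ((fun ξ => ‖x - x₀‖ / √(2 * (T - ξ))) '' Ioo t T) :=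
      himage ▸ integrable_exp_neg_sq_div_two.integrableOn
    exact Integrable.const_mul
      ((integrableOn_image_iff_integrableOn_abs_deriv_smul measurableSet_Ioo hderiv hinj _).1 hg) _
  · rw [setIntegral_congr_fun measurableSet_Ioo hjac, integral_const_mul, ← himage,
      integral_image_eq_integral_abs_deriv_smul measurableSet_Ioo hderiv hinj]

end Substitution

lemma heatKer_eq_zero_of_le {T t : ℝ} (x₀ x : E2) (ht : T ≤ t) : heatKer T x₀ x t = 0 := by
  rw [heatKer, sqrt_eq_zero'.2 (by nlinarith [pi_pos]), div_zero]

lemma norm_tangent_le (γ : ℝ → ℝ → E2) (x t : ℝ) : ‖tangent γ x t‖ ≤ 1 := by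
  rw [tangent, norm_smul, norm_inv, norm_norm]
  exact inv_mul_le_one

lemma norm_boundaryTerm_le (γ : Fin 3 → ℝ → ℝ → E2) (P : Fin 3 → E2) (T : ℝ) (x₀ : E2)
    (i : Fin 3) (ξ : ℝ) :
    ‖boundaryTerm γ P T x₀ i ξ‖ ≤ (2 * (T - ξ))⁻¹ * ‖P i - x₀‖ * heatKer T x₀ (P i) ξ := by
  rcases le_or_gt T ξ with hξ | hξ
  · simp [boundaryTerm, heatKer_eq_zero_of_le x₀ (P i) hξ]
  have hρ : 0 ≤ heatKer T x₀ (P i) ξ := div_nonneg (exp_pos _).le (sqrt_nonneg _)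
  rw [boundaryTerm, norm_mul, Real.norm_of_nonneg hρ]
  gcongr
  calc ‖inner ℝ ((2 * (T - ξ))⁻¹ • (P i - x₀)) (tangent (γ i) 1 ξ)‖
      ≤ ‖(2 * (T - ξ))⁻¹ • (P i - x₀)‖ * ‖tangent (γ i) 1 ξ‖ := norm_inner_le_norm _ _
    _ ≤ ‖(2 * (T - ξ))⁻¹ • (P i - x₀)‖ := mul_le_of_le_one_right (norm_nonneg _)
        (norm_tangent_le _ _ _)
    _ = (2 * (T - ξ))⁻¹ * ‖P i - x₀‖ := by
        rw [norm_smul, Real.norm_of_nonneg (inv_nonneg.2 (by linarith))]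

lemma abs_integral_boundaryTerm_le (γ : Fin 3 → ℝ → ℝ → E2) (P : Fin 3 → E2) (x₀ : E2)
    (i : Fin 3) {T t : ℝ} (ht : t < T) :
    |∫ ξ in t..T, boundaryTerm γ P T x₀ i ξ| ≤
      (√(2 * π))⁻¹ * ∫ y in Ioi (‖P i - x₀‖ / √(2 * (T - t))), exp (-y ^ 2 / 2) := by
  rcases eq_or_ne (P i) x₀ with hx | hx
  · have hzero : boundaryTerm γ P T x₀ i = 0 := by
      funext ξ; simp [boundaryTerm, hx]
    rw [hzero]
    simp only [Pi.zero_apply, intervalIntegral.integral_zero, abs_zero]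
    exact mul_nonneg (by positivity)
      (setIntegral_nonneg measurableSet_Ioi fun _ _ => (exp_pos _).le)
  obtain ⟨hint, hval⟩ := integrableOn_Ioo_mul_heatKer_and_integral_eq hx ht
  calc |∫ ξ in t..T, boundaryTerm γ P T x₀ i ξ|
      ≤ ∫ ξ in t..T, (2 * (T - ξ))⁻¹ * ‖P i - x₀‖ * heatKer T x₀ (P i) ξ :=
        intervalIntegral.norm_integral_le_of_norm_le ht.le
          (.of_forall fun ξ _ => norm_boundaryTerm_le γ P T x₀ i ξ)
          ((intervalIntegrable_iff_integrableOn_Ioo_of_le ht.le).2 hint)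
    _ = _ := by rw [intervalIntegral.integral_of_le ht.le, integral_Ioc_eq_integral_Ioo, hval]

lemma tendsto_div_sqrt_two_mul_sub_nhdsLT {d : ℝ} (hd : 0 < d) (T : ℝ) :
    Tendsto (fun t => d / √(2 * (T - t))) (𝓝[<] T) atTop := by
  have hsqrt : Tendsto (fun t => √(2 * (T - t))) (𝓝[<] T) (𝓝[>] 0) := by
    refine tendsto_nhdsWithin_iff.2 ⟨?_, ?_⟩
    · have : Continuous fun t => √(2 * (T - t)) := by fun_prop
      simpa using this.continuousWithinAt.tendsto (x := T) (s := Iio T)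
    · filter_upwards [self_mem_nhdsWithin] with t ht
      exact sqrt_pos.2 (by linarith [mem_Iio.1 ht])
  simpa only [div_eq_mul_inv, Function.comp_def] using
    (tendsto_inv_nhdsGT_zero.comp hsqrt).const_mul_atTop hd

lemma tendsto_integral_boundaryTerm_nhdsLT (γ : Fin 3 → ℝ → ℝ → E2) (P : Fin 3 → E2) (T : ℝ)
    (x₀ : E2) (i : Fin 3) (hx : x₀ ≠ P i) :
    Tendsto (fun t => ∫ ξ in t..T, boundaryTerm γ P T x₀ i ξ) (𝓝[<] T) (𝓝 0) := by
  have hd : 0 < ‖P i - x₀‖ := norm_pos_iff.2 (sub_ne_zero.2 hx.symm)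
  have htail := (tendsto_integral_Ioi_exp_neg_sq_div_two.comp
    (tendsto_div_sqrt_two_mul_sub_nhdsLT hd T)).const_mul (√(2 * π))⁻¹
  rw [mul_zero] at htail
  refine squeeze_zero_norm' ?_ htail
  filter_upwards [self_mem_nhdsWithin] with t ht
  exact abs_integral_boundaryTerm_le γ P x₀ i ht

theorem boundary_term_estimate_general
    (P : Fin 3 → E2) (T : ℝ)
    (γ : Fin 3 → ℝ → ℝ → E2)
    (x₀ : E2) :
    (∀ i : Fin 3, ∀ t ∈ Ico 0 T,
      |∫ ξ in t..T, boundaryTerm γ P T x₀ i ξ| ≤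
          (Real.sqrt (2 * π))⁻¹ *
            (∫ y in Ioi (‖P i - x₀‖ / Real.sqrt (2 * (T - t))), Real.exp (-y ^ 2 / 2)) ∧
        (Real.sqrt (2 * π))⁻¹ *
            (∫ y in Ioi (‖P i - x₀‖ / Real.sqrt (2 * (T - t))), Real.exp (-y ^ 2 / 2)) ≤
          1 / 2) ∧
    ((∀ i, x₀ ≠ P i) →
      Tendsto (fun t => ∑ i : Fin 3, ∫ ξ in t..T, boundaryTerm γ P T x₀ i ξ)
        (𝓝[<] T) (𝓝 0)) := by
  refine ⟨fun i t ht => ⟨abs_integral_boundaryTerm_le γ P x₀ i ht.2,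
    inv_sqrt_two_pi_mul_integral_Ioi_le_half (by positivity)⟩, fun hx => ?_⟩
  simpa using tendsto_finsetSum Finset.univ fun i _ =>
    tendsto_integral_boundaryTerm_nhdsLT γ P T x₀ i (hx i)

/-- Let `𝕋_t` be a triod evolving by curvature on `[0,T)` with fixed
endpoints `P¹,P²,P³`, and set `dⁱ = |Pⁱ − x₀|`. Then for every `i` and `t ∈ [0,T)`,
`|∫_t^T ⟨(Pⁱ−x₀)/(2(T−ξ)), τⁱ(1,ξ)⟩ ρ_{x₀}(Pⁱ,ξ) dξ|
  ≤ (1/√(2π)) ∫_{dⁱ/√(2(T−t))}^{∞} e^{−y²/2} dy ≤ 1/2`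
(the bound by `1/2` holding for every `x₀`); consequently, whenever `x₀ ≠ Pⁱ` for all
`i`, `lim_{t→T} Σᵢ ∫_t^T ⟨(Pⁱ−x₀)/(2(T−ξ)), τⁱ(1,ξ)⟩ ρ_{x₀}(Pⁱ,ξ) dξ = 0`. -/
theorem boundary_term_estimate
    (Ω : Set E2) (P : Fin 3 → E2) (T : ℝ) (hT : 0 < T)
    (γ : Fin 3 → ℝ → ℝ → E2)
    (hflow : IsTriodFlow Ω P γ (Ico 0 T))
    (x₀ : E2) :
    (∀ i : Fin 3, ∀ t ∈ Ico 0 T,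
      |∫ ξ in t..T, boundaryTerm γ P T x₀ i ξ| ≤
          (Real.sqrt (2 * π))⁻¹ *
            (∫ y in Ioi (‖P i - x₀‖ / Real.sqrt (2 * (T - t))), Real.exp (-y ^ 2 / 2)) ∧
        (Real.sqrt (2 * π))⁻¹ *
            (∫ y in Ioi (‖P i - x₀‖ / Real.sqrt (2 * (T - t))), Real.exp (-y ^ 2 / 2)) ≤
          1 / 2) ∧
    ((∀ i, x₀ ≠ P i) →
      Tendsto (fun t => ∑ i : Fin 3, ∫ ξ in t..T, boundaryTerm γ P T x₀ i ξ)
        (𝓝[<] T) (𝓝 0)) :=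
  boundary_term_estimate_general P T γ x₀
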